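/- For every n ≥ 1, the polynomial (x + n)^n (x^2 − x + 1) is irreducible in ℕ[x]: it has nonnegative coefficients and cannot be written as a product of two nonunit polynomials with natural number coefficients. -/

import Mathlib

/-!
The coefficients of `(X + n)^n` decrease, so in `(X + n)^n (X² - X + 1)` each coefficient
`a_k - a_{k+1} + a_{k+2}` is nonnegative (the linear one vanishes). Conversely the linear
coefficient of `(X + c)^m (X² - X + 1)` is `c^(m-1) (m - c)`, negative when `m < c`.
In `ℤ[X]` both `X + n` and `X² - X + 1 = Φ₆` are prime, and the factors of a monic polynomial
in `ℕ[X]` are monic. So in a factorization `g h` the factor `Φ₆` goes to one side, say `h`,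
which is then `(X + n)^m Φ₆` with `m ≤ n`; nonnegativity of its coefficients forces `m = n`,
i.e. `g = 1`.
-/

open Polynomial

namespace Polynomial

theorem monic_mul_iff_of_subsingleton_units {R : Type*} [CommSemiring R] [NoZeroDivisors R]
    [Subsingleton Rˣ] {p q : R[X]} : (p * q).Monic ↔ p.Monic ∧ q.Monic := by
  simp only [Monic, leadingCoeff_mul, mul_eq_one]

section CoeffMulXSqSubXAddOne

variable {R : Type*} [CommRing R] (Q : R[X])

theorem coeff_mul_X_sq_sub_X_add_one_zero : (Q * (X ^ 2 - X + 1)).coeff 0 = Q.coeff 0 := by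
  simp [mul_coeff_zero]

theorem coeff_mul_X_sq_sub_X_add_one_one :
    (Q * (X ^ 2 - X + 1)).coeff 1 = Q.coeff 1 - Q.coeff 0 := by
  rw [show Q * (X ^ 2 - X + 1) = Q * X * X - Q * X + Q by ring]
  simp [coeff_mul_X, mul_coeff_zero, sub_eq_neg_add]

theorem coeff_mul_X_sq_sub_X_add_one_add_two (k : ℕ) :
    (Q * (X ^ 2 - X + 1)).coeff (k + 2) = Q.coeff k - Q.coeff (k + 1) + Q.coeff (k + 2) := by
  rw [show Q * (X ^ 2 - X + 1) = Q * X * X - Q * X + Q by ring]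
  simp only [coeff_add, coeff_sub, coeff_mul_X]

end CoeffMulXSqSubXAddOne

theorem coeff_one_X_add_C_pow_mul_X_sq_sub_X_add_one {R : Type*} [CommRing R] (c : R) (m : ℕ) :
    ((X + C c) ^ m * (X ^ 2 - X + 1)).coeff 1 = m * c ^ (m - 1) - c ^ m := by
  rw [coeff_mul_X_sq_sub_X_add_one_one, coeff_X_add_C_pow, coeff_X_add_C_pow]
  simp [mul_comm]

end Polynomial

theorem Nat.choose_succ_mul_pow_le {m c : ℕ} (hmc : m ≤ c) (j : ℕ) :
    m.choose (j + 1) * c ^ (m - (j + 1)) ≤ m.choose j * c ^ (m - j) := by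
  rcases le_or_gt m j with hjm | hjm
  · simp [Nat.choose_eq_zero_of_lt (Nat.lt_succ_of_le hjm)]
  · calc m.choose (j + 1) * c ^ (m - (j + 1))
        ≤ m.choose (j + 1) * (j + 1) * c ^ (m - (j + 1)) :=
          Nat.mul_le_mul_right _ (Nat.le_mul_of_pos_right _ j.succ_pos)
      _ = m.choose j * (m - j) * c ^ (m - (j + 1)) := by rw [Nat.choose_succ_right_eq]
      _ ≤ m.choose j * c * c ^ (m - (j + 1)) := by gcongr; omega
      _ = m.choose j * c ^ (m - j) := by
          rw [mul_assoc, ← pow_succ', show (m - (j + 1)).succ = m - j by omega]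

theorem coeff_X_add_C_self_pow_mul_X_sq_sub_X_add_one_nonneg {n : ℕ} (hn : 1 ≤ n) (k : ℕ) :
    0 ≤ ((X + C (n : ℤ)) ^ n * (X ^ 2 - X + 1)).coeff k := by
  match k with
  | 0 =>
    rw [coeff_mul_X_sq_sub_X_add_one_zero, coeff_X_add_C_pow]
    positivity
  | 1 =>
    rw [coeff_one_X_add_C_pow_mul_X_sq_sub_X_add_one, ← pow_succ', Nat.sub_add_cancel hn, sub_self]
  | k + 2 =>
    have hanti : ((X + C (n : ℤ)) ^ n).coeff (k + 1) ≤ ((X + C (n : ℤ)) ^ n).coeff k := by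
      simp only [coeff_X_add_C_pow, mul_comm ((n : ℤ) ^ _)]
      exact_mod_cast Nat.choose_succ_mul_pow_le le_rfl k
    rw [coeff_mul_X_sq_sub_X_add_one_add_two, coeff_X_add_C_pow (k := k + 2)]
    have : (0 : ℤ) ≤ n ^ (n - (k + 2)) * (n.choose (k + 2) : ℤ) := by positivity
    linarith

theorem le_of_coeff_X_add_C_pow_mul_X_sq_sub_X_add_one_nonneg {c : ℤ} {m : ℕ}
    (h : ∀ k, 0 ≤ ((X + C c) ^ m * (X ^ 2 - X + 1)).coeff k) : c ≤ m := by
  by_contra! hmc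
  have h1 := h 1
  rw [coeff_one_X_add_C_pow_mul_X_sq_sub_X_add_one] at h1
  cases m with
  | zero => simp at h1
  | succ m =>
    rw [Nat.add_sub_cancel, pow_succ'] at h1
    have : 0 < c ^ m := pow_pos (by omega) m
    nlinarith

theorem eq_one_of_mul_eq_X_add_C_pow_mul_X_sq_sub_X_add_one {A B : ℤ[X]} {c : ℤ} {n : ℕ}
    (hnc : n ≤ c) (hA : A.Monic) (hAB : A * B = (X + C c) ^ n * (X ^ 2 - X + 1))
    (hqB : X ^ 2 - X + 1 ∣ B) (hB : ∀ k, 0 ≤ B.coeff k) : A = 1 := by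
  obtain ⟨B', rfl⟩ := hqB
  have hq : (X ^ 2 - X + 1 : ℤ[X]) ≠ 0 := by simpa using cyclotomic_ne_zero 6 ℤ
  have hAB' : A * B' = (X + C c) ^ n := mul_right_cancel₀ hq (by rw [← hAB]; ring)
  obtain ⟨a, ha, hassoc⟩ := (dvd_prime_pow (by simpa using prime_X_sub_C (-c)) n).mp
    (Dvd.intro _ hAB')
  obtain rfl : A = (X + C c) ^ a := eq_of_monic_of_associated hA ((monic_X_add_C c).pow a) hassoc
  have hB' : B' = (X + C c) ^ (n - a) := mul_left_cancel₀ hA.ne_zero (by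
    rw [hAB', ← pow_add, Nat.add_sub_cancel' ha])
  subst hB'
  have hca := le_of_coeff_X_add_C_pow_mul_X_sq_sub_X_add_one_nonneg (by simpa [mul_comm] using hB)
  obtain rfl : a = 0 := by push_cast [Nat.cast_sub ha] at hca; omega
  exact pow_zero _

theorem eq_one_or_eq_one_of_map_mul_eq_X_add_C_pow_mul_X_sq_sub_X_add_one {g h : ℕ[X]}
    {c : ℤ} {n : ℕ} (hnc : n ≤ c)
    (hgh : (g * h).map (Nat.castRingHom ℤ) = (X + C c) ^ n * (X ^ 2 - X + 1)) :
    g = 1 ∨ h = 1 := by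
  have hq : Prime (X ^ 2 - X + 1 : ℤ[X]) := by
    simpa using (cyclotomic.irreducible (n := 6) (by norm_num)).prime
  have hmonic : g.Monic ∧ h.Monic := by
    refine monic_mul_iff_of_subsingleton_units.mp
      (monic_of_injective (f := Nat.castRingHom ℤ) Nat.cast_injective ?_)
    rw [hgh]
    exact ((monic_X_add_C c).pow n).mul (by simpa using cyclotomic.monic 6 ℤ)
  have hnonneg (p : ℕ[X]) (k : ℕ) : 0 ≤ (p.map (Nat.castRingHom ℤ)).coeff k := by simp
  have map_eq_one {p : ℕ[X]} (hp : p.map (Nat.castRingHom ℤ) = 1) : p = 1 :=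
    map_injective _ Nat.cast_injective (by rw [hp, Polynomial.map_one])
  rw [Polynomial.map_mul] at hgh
  rcases hq.dvd_or_dvd (by rw [hgh]; exact dvd_mul_left _ _) with hqg | hqh
  · exact .inr <| map_eq_one <| eq_one_of_mul_eq_X_add_C_pow_mul_X_sq_sub_X_add_one hnc
      (hmonic.2.map _) (by rw [mul_comm, hgh]) hqg (hnonneg g)
  · exact .inl <| map_eq_one <| eq_one_of_mul_eq_X_add_C_pow_mul_X_sq_sub_X_add_one hnc
      (hmonic.1.map _) hgh hqh (hnonneg h)

/-- For every `n ≥ 1`, the polynomial `(x + n)^n (x^2 - x + 1)` has nonnegative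
coefficients, and it is irreducible in `ℕ[x]`: whenever it is the image of a
product `g * h` of two polynomials with natural number coefficients, `g` or `h`
is a unit. -/
theorem key_atom_irreducible :
    ∀ n : ℕ, 1 ≤ n →
      (∀ k : ℕ,
        0 ≤ (((X + C (n : ℤ)) ^ n * (X ^ 2 - X + 1)) : Polynomial ℤ).coeff k) ∧
      (∀ g h : Polynomial ℕ,
        ((X + C (n : ℤ)) ^ n * (X ^ 2 - X + 1) : Polynomial ℤ)
            = (g * h).map (Nat.castRingHom ℤ) →
          IsUnit g ∨ IsUnit h) := by
  intro n hn
  refine ⟨coeff_X_add_C_self_pow_mul_X_sq_sub_X_add_one_nonneg hn, fun g h hgh => ?_⟩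
  rcases eq_one_or_eq_one_of_map_mul_eq_X_add_C_pow_mul_X_sq_sub_X_add_one le_rfl hgh.symm
    with rfl | rfl
  exacts [.inl isUnit_one, .inr isUnit_one]
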